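/- No Type 3 NG-graph is an NGD-graph: if G is an NG-graph such that G[A_G] is isomorphic to the 5-cycle C₅, then χ_D(G) + χ_D(Ḡ) < n + D(G). -/

import Mathlib

set_option maxRecDepth 10000


open SimpleGraph

variable {V : Type*} [Fintype V] [DecidableEq V]

/-- A coloring `f` with `r` colors is distinguishing for `G` if the identity is the
only automorphism of `G` preserving all colors. -/
def IsDistinguishing (G : SimpleGraph V) {r : ℕ} (f : V → Fin r) : Prop :=
  ∀ φ : G ≃g G, (∀ v, f (φ v) = f v) → ∀ v, φ v = v

/-- A coloring is proper if adjacent vertices receive different colors. -/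
def IsProperColoring (G : SimpleGraph V) {r : ℕ} (f : V → Fin r) : Prop :=
  ∀ u v, G.Adj u v → f u ≠ f v

/-- The distinguishing number of `G`: least `r` admitting a distinguishing coloring. -/
noncomputable def distNum (G : SimpleGraph V) : ℕ :=
  sInf {r : ℕ | ∃ f : V → Fin r, IsDistinguishing G f}

/-- The distinguishing chromatic number of `G`: least `r` admitting a proper
distinguishing coloring. -/
noncomputable def distChromNum (G : SimpleGraph V) : ℕ :=
  sInf {r : ℕ | ∃ f : V → Fin r, IsProperColoring G f ∧ IsDistinguishing G f}

/-- The chromatic number of `G`, as a natural number. -/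
noncomputable def chromNat {W : Type*} (G : SimpleGraph W) : ℕ :=
  G.chromaticNumber.toNat

/-- `G` is an NG-graph: `χ(G) + χ(Ḡ) = n + 1`. -/
def IsNG {W : Type*} [Finite W] (G : SimpleGraph W) : Prop :=
  chromNat G + chromNat Gᶜ = Nat.card W + 1

/-- `G` is an NGD-graph: `χ_D(G) + χ_D(Ḡ) = n + D(G)`. -/
noncomputable def IsNGD (G : SimpleGraph V) : Prop :=
  distChromNum G + distChromNum Gᶜ = Fintype.card V + distNum G

/-- `S` is an independent set of `G`. -/
def IsIndepSet' (G : SimpleGraph V) (S : Set V) : Prop :=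
  ∀ u ∈ S, ∀ v ∈ S, ¬ G.Adj u v

/-- The set of vertices of degree `χ(G) - 1`. -/
def setA (G : SimpleGraph V) [DecidableRel G.Adj] : Set V :=
  {v | G.degree v = chromNat G - 1}

/-- The set of vertices of degree greater than `χ(G) - 1`. -/
def setB (G : SimpleGraph V) [DecidableRel G.Adj] : Set V :=
  {v | G.degree v > chromNat G - 1}

/-- The set of vertices of degree less than `χ(G) - 1`. -/
def setC (G : SimpleGraph V) [DecidableRel G.Adj] : Set V :=
  {v | G.degree v < chromNat G - 1}

namespace NGaux

open Finset
set_option linter.unusedSectionVars false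

open scoped Classical

/-- `m` colors suffice to properly color the vertices inside `s`. -/
def ColS (G : SimpleGraph V) (s : Finset V) (m : ℕ) : Prop :=
  ∃ f : V → ℕ, (∀ v ∈ s, f v < m) ∧ (∀ u ∈ s, ∀ v ∈ s, G.Adj u v → f u ≠ f v)

/-- relative chromatic number -/
noncomputable def chromS (G : SimpleGraph V) (s : Finset V) : ℕ := sInf {m | ColS G s m}

/-- degree within `s` -/
noncomputable def degS (G : SimpleGraph V) (s : Finset V) (v : V) : ℕ :=
  (s.filter (G.Adj v)).card

lemma colS_card_univ (G : SimpleGraph V) (s : Finset V) : ColS G s (Fintype.card V) := by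
  refine ⟨fun v => (Fintype.equivFin V v).val, fun v _ => (Fintype.equivFin V v).isLt, ?_⟩
  intro u hu v hv hadj
  simp only [ne_eq, Fin.val_eq_val, EmbeddingLike.apply_eq_iff_eq]
  exact hadj.ne

lemma chromS_colS (G : SimpleGraph V) (s : Finset V) : ColS G s (chromS G s) := by
  have hmem : Fintype.card V ∈ {m | ColS G s m} := colS_card_univ G s
  exact Nat.sInf_mem ⟨Fintype.card V, hmem⟩

lemma chromS_le {G : SimpleGraph V} {s : Finset V} {m : ℕ} (h : ColS G s m) :
    chromS G s ≤ m := Nat.sInf_le h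

lemma ColS.mono_set {G : SimpleGraph V} {s t : Finset V} {m : ℕ} (h : ColS G s m)
    (hts : t ⊆ s) : ColS G t m := by
  obtain ⟨f, h1, h2⟩ := h
  exact ⟨f, fun v hv => h1 v (hts hv), fun u hu v hv => h2 u (hts hu) v (hts hv)⟩

lemma chromS_mono {G : SimpleGraph V} {s t : Finset V} (hts : t ⊆ s) :
    chromS G t ≤ chromS G s := chromS_le ((chromS_colS G s).mono_set hts)

lemma exists_color {F : Finset ℕ} {m : ℕ} (h : F.card < m) : ∃ c < m, c ∉ F := by
  by_contra hc
  push_neg at hc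
  have : Finset.range m ⊆ F := fun c hcm => hc c (Finset.mem_range.mp hcm)
  have := Finset.card_le_card this
  simp at this
  omega

lemma degS_def (G : SimpleGraph V) (s : Finset V) (v : V) [inst : DecidablePred (G.Adj v)] :
    degS G s v = (s.filter (G.Adj v)).card :=
  congrArg Finset.card (Finset.filter_congr_decidable s (G.Adj v) _)

lemma degS_erase_self (G : SimpleGraph V) (s : Finset V) (v : V) :
    degS G (s.erase v) v = degS G s v := by
  unfold degS
  congr 1
  ext u
  simp only [mem_filter, mem_erase]
  constructor
  · rintro ⟨⟨-, hu⟩, ha⟩; exact ⟨hu, ha⟩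
  · rintro ⟨hu, ha⟩; exact ⟨⟨fun h => (by simpa [h] using ha : False), hu⟩, ha⟩

/-- greedy extension: if the part without `v` is `m`-colorable and `v` has fewer than `m`
neighbors in `s`, then all of `s` is `m`-colorable. -/
lemma ColS.insert_self {G : SimpleGraph V} {s : Finset V} {v : V} {m : ℕ}
    (h : ColS G (s.erase v) m) (hdeg : degS G s v < m) : ColS G s m := by
  obtain ⟨f, h1, h2⟩ := h
  have hforb : (((s.erase v).filter (G.Adj v)).image f).card < m := by
    calc (((s.erase v).filter (G.Adj v)).image f).card ≤ ((s.erase v).filter (G.Adj v)).card :=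
          Finset.card_image_le
    _ = degS G (s.erase v) v := rfl
    _ = degS G s v := degS_erase_self G s v
    _ < m := hdeg
  obtain ⟨c, hcm, hcf⟩ := exists_color hforb
  refine ⟨Function.update f v c, ?_, ?_⟩
  · intro u hu
    by_cases hne : u = v
    · subst hne; simpa using hcm
    · rw [Function.update_of_ne hne]
      exact h1 u (Finset.mem_erase.mpr ⟨hne, hu⟩)
  · intro u hu w hw hadj
    by_cases hu' : v = u
    · subst hu'
      by_cases hw' : v = w
      · subst hw'; exact absurd hadj (G.irrefl)
      · rw [Function.update_self, Function.update_of_ne (fun h => hw' h.symm)]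
        intro hEq
        exact hcf (Finset.mem_image.mpr ⟨w, Finset.mem_filter.mpr
          ⟨Finset.mem_erase.mpr ⟨fun h => hw' h.symm, hw⟩, hadj⟩, hEq.symm⟩)
    · by_cases hw' : v = w
      · subst hw'
        rw [Function.update_self, Function.update_of_ne (fun h => hu' h.symm)]
        intro hEq
        exact hcf (Finset.mem_image.mpr ⟨u, Finset.mem_filter.mpr
          ⟨Finset.mem_erase.mpr ⟨fun h => hu' h.symm, hu⟩, hadj.symm⟩, hEq⟩)
      · rw [Function.update_of_ne (fun h => hu' h.symm), Function.update_of_ne (fun h => hw' h.symm)]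
        exact h2 u (Finset.mem_erase.mpr ⟨fun h => hu' h.symm, hu⟩) w
          (Finset.mem_erase.mpr ⟨fun h => hw' h.symm, hw⟩) hadj

/-- fresh color extension -/
lemma ColS.insert_fresh {G : SimpleGraph V} {s : Finset V} {v : V} {m : ℕ}
    (h : ColS G (s.erase v) m) : ColS G s (m + 1) := by
  obtain ⟨f, h1, h2⟩ := h
  refine ⟨Function.update f v m, ?_, ?_⟩
  · intro u hu
    by_cases hne : u = v
    · subst hne; simp
    · rw [Function.update_of_ne hne]
      exact Nat.lt_succ_of_lt (h1 u (Finset.mem_erase.mpr ⟨hne, hu⟩))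
  · intro u hu w hw hadj
    by_cases hu' : v = u
    · subst hu'
      by_cases hw' : v = w
      · subst hw'; exact absurd hadj (G.irrefl)
      · rw [Function.update_self, Function.update_of_ne (fun h => hw' h.symm)]
        exact fun hEq => absurd hEq.symm (Nat.ne_of_lt (h1 w
          (Finset.mem_erase.mpr ⟨fun h => hw' h.symm, hw⟩)))
    · by_cases hw' : v = w
      · subst hw'
        rw [Function.update_self, Function.update_of_ne (fun h => hu' h.symm)]
        exact Nat.ne_of_lt (h1 u (Finset.mem_erase.mpr ⟨fun h => hu' h.symm, hu⟩))
      · rw [Function.update_of_ne (fun h => hu' h.symm), Function.update_of_ne (fun h => hw' h.symm)]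
        exact h2 u (Finset.mem_erase.mpr ⟨fun h => hu' h.symm, hu⟩) w
          (Finset.mem_erase.mpr ⟨fun h => hw' h.symm, hw⟩) hadj

lemma chromS_le_erase_add_one (G : SimpleGraph V) (s : Finset V) (v : V) :
    chromS G s ≤ chromS G (s.erase v) + 1 :=
  chromS_le ((chromS_colS G (s.erase v)).insert_fresh)

lemma degS_add_compl (G : SimpleGraph V) {s : Finset V} {v : V} (hv : v ∈ s) :
    degS G s v + degS Gᶜ s v + 1 = s.card := by
  classical
  have h1 : (s.filter (G.Adj v)).card + (s.filter (fun u => ¬ G.Adj v u)).card = s.card :=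
    Finset.card_filter_add_card_filter_not (p := fun u => G.Adj v u)
  have h2 : s.filter (fun u => ¬ G.Adj v u) = insert v (s.filter (Gᶜ.Adj v)) := by
    ext u
    simp only [Finset.mem_filter, Finset.mem_insert, compl_adj]
    constructor
    · rintro ⟨hu, hna⟩
      by_cases h : u = v
      · exact Or.inl h
      · exact Or.inr ⟨hu, fun hvu => h hvu.symm, hna⟩
    · rintro (rfl | ⟨hu, -, hna⟩)
      · exact ⟨hv, fun h => G.irrefl h⟩
      · exact ⟨hu, hna⟩
  have h3 : v ∉ s.filter (Gᶜ.Adj v) := by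
    simp [Finset.mem_filter]
  have h4 : (insert v (s.filter (Gᶜ.Adj v))).card = (s.filter (Gᶜ.Adj v)).card + 1 :=
    Finset.card_insert_of_notMem h3
  have h5 := congrArg Finset.card h2
  rw [degS_def, degS_def]
  omega

/-- Nordhaus–Gaddum upper bound, relativized. -/
theorem ngi (s : Finset V) (G : SimpleGraph V) :
    chromS G s + chromS Gᶜ s ≤ s.card + 1 := by
  induction s using Finset.strongInduction with
  | _ s ih =>
    rcases s.eq_empty_or_nonempty with rfl | ⟨v, hv⟩
    · have h0 : ColS G ∅ 0 := ⟨fun _ => 0, by simp, by simp⟩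
      have h0' : ColS Gᶜ ∅ 0 := ⟨fun _ => 0, by simp, by simp⟩
      have := chromS_le h0
      have := chromS_le h0'
      omega
    · have hcard : (s.erase v).card + 1 = s.card := Finset.card_erase_add_one hv
      have IH := ih (s.erase v) (Finset.erase_ssubset hv)
      have h1 : chromS G s ≤ chromS G (s.erase v) + 1 := chromS_le_erase_add_one G s v
      have h2 : chromS Gᶜ s ≤ chromS Gᶜ (s.erase v) + 1 := chromS_le_erase_add_one Gᶜ s v
      by_cases hA : chromS G s ≤ chromS G (s.erase v)
      · omega
      by_cases hB : chromS Gᶜ s ≤ chromS Gᶜ (s.erase v)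
      · omega
      have hd1 : chromS G (s.erase v) ≤ degS G s v := by
        by_contra hlt
        push_neg at hlt
        exact hA (chromS_le ((chromS_colS G (s.erase v)).insert_self hlt))
      have hd2 : chromS Gᶜ (s.erase v) ≤ degS Gᶜ s v := by
        by_contra hlt
        push_neg at hlt
        exact hB (chromS_le ((chromS_colS Gᶜ (s.erase v)).insert_self hlt))
      have hsum := degS_add_compl G hv
      omega


lemma ColS.mono_nat {G : SimpleGraph V} {s : Finset V} {m m' : ℕ} (h : ColS G s m)
    (hm : m ≤ m') : ColS G s m' := by
  obtain ⟨f, h1, h2⟩ := h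
  exact ⟨f, fun v hv => lt_of_lt_of_le (h1 v hv) hm, h2⟩

lemma chromS_pos {G : SimpleGraph V} {s : Finset V} (hs : s.Nonempty) : 1 ≤ chromS G s := by
  obtain ⟨v, hv⟩ := hs
  obtain ⟨f, h1, -⟩ := chromS_colS G s
  have := h1 v hv
  omega

lemma degS_erase_of_not_adj {G : SimpleGraph V} {s : Finset V} {u y : V}
    (h : ¬ G.Adj y u) : degS G (s.erase u) y = degS G s y := by
  unfold degS
  congr 1
  ext w
  simp only [mem_filter, mem_erase]
  constructor
  · rintro ⟨⟨-, hw⟩, ha⟩; exact ⟨hw, ha⟩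
  · rintro ⟨hw, ha⟩
    refine ⟨⟨?_, hw⟩, ha⟩
    rintro rfl; exact h ha

/-- The key structure theorem for NG-graphs: every vertex of degree `≥ χ` is adjacent
to every other vertex of degree `≥ χ - 1`. -/
theorem Tthm : ∀ n : ℕ, ∀ s : Finset V, s.card = n → ∀ G : SimpleGraph V,
    chromS G s + chromS Gᶜ s = s.card + 1 →
    ∀ u ∈ s, ∀ x ∈ s, u ≠ x →
    chromS G s ≤ degS G s u → chromS G s ≤ degS G s x + 1 → G.Adj u x := by
  intro n
  induction n using Nat.strong_induction_on with
  | _ n IH =>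
    intro s hn G hNG u hu x hx hune hdu hdx
    by_contra hadj
    set k := chromS G s with hk
    set kb := chromS Gᶜ s with hkb
    set s' := s.erase u with hs'
    have hxu : x ≠ u := hune.symm
    have hxs' : x ∈ s' := Finset.mem_erase.mpr ⟨hxu, hx⟩
    have hcard' : s'.card + 1 = s.card := Finset.card_erase_add_one hu
    have hk1 : 1 ≤ k := chromS_pos ⟨u, hu⟩
    have hsumu := degS_add_compl G hu
    have hsumu' := degS_add_compl Gᶜ hu
    -- kb ≥ 2 and degS Gᶜ s u + 2 ≤ kb
    have hdcu : degS Gᶜ s u + 2 ≤ kb := by omega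
    -- chromS Gᶜ s' = kb
    have hcomp_le : chromS Gᶜ s' ≤ kb := chromS_mono (Finset.erase_subset u s)
    have hcomp' : chromS Gᶜ s' = kb := by
      rcases Nat.lt_or_ge (chromS Gᶜ s') kb with hlt | hge
      · exfalso
        have h1 : ColS Gᶜ s' (kb - 1) := (chromS_colS Gᶜ s').mono_nat (by omega)
        have h2 : degS Gᶜ s u < kb - 1 := by omega
        have h3 : ColS Gᶜ s (kb - 1) := by
          have := ColS.insert_self (s := s) (v := u) (m := kb - 1) h1 h2
          exact this
        have := chromS_le h3
        omega
      · omega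
    -- chromS G s' = k - 1
    have hle1 : k ≤ chromS G s' + 1 := chromS_le_erase_add_one G s u
    have hngi' := ngi s' G
    have hG' : chromS G s' + 1 = k := by omega
    set k' := chromS G s' with hk'
    have hNG' : chromS G s' + chromS Gᶜ s' = s'.card + 1 := by omega
    have hNG'c : chromS Gᶜ s' + chromS Gᶜᶜ s' = s'.card + 1 := by
      rw [compl_compl]; omega
    have IH1 := IH s'.card (by omega) s' rfl G hNG'
    have IH2 := IH s'.card (by omega) s' rfl Gᶜ hNG'c
    -- x has high degree in s'
    have hdx' : degS G s' x = degS G s x := degS_erase_of_not_adj (fun h => hadj h.symm)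
    have hxB : k' ≤ degS G s' x := by omega
    -- F1 : x is adjacent to everything in s' of degree ≥ k' - 1
    have F1 : ∀ y ∈ s', y ≠ x → k' ≤ degS G s' y + 1 → G.Adj x y := by
      intro y hy hyx hdy
      exact IH1 x hxs' y hy (fun h => hyx h.symm) hxB hdy
    -- F2 : low degree vertices are non-adjacent to low and middle degree vertices
    have F2 : ∀ c ∈ s', degS G s' c + 1 < k' → ∀ y ∈ s', degS G s' y + 1 ≤ k' → c ≠ y →
        ¬ G.Adj c y := by
      intro c hc hdc y hy hdy hcy
      have h1 := degS_add_compl G (s := s') hc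
      have h2 := degS_add_compl G (s := s') hy
      have hcc : chromS Gᶜ s' ≤ degS Gᶜ s' c := by omega
      have hcy' : chromS Gᶜ s' ≤ degS Gᶜ s' y + 1 := by omega
      have := IH2 c hc y hy hcy hcc hcy'
      rw [compl_adj] at this
      exact this.2
    -- the coloring of s' with k' colors
    obtain ⟨f₀, hf₀b, hf₀p⟩ := chromS_colS G s'
    -- x is not a low-degree vertex
    have hxnotC : ¬ (degS G s' x + 1 < k') := by omega
    -- pick recolors for low-degree vertices
    have hpick : ∀ y, (y ∈ s' ∧ degS G s' y + 1 < k') →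
        ∃ c, c < k' ∧ c ∉ ((s'.filter (G.Adj y)).image f₀ ∪ {f₀ x}) := by
      rintro y ⟨hy, hdy⟩
      apply exists_color
      calc ((s'.filter (G.Adj y)).image f₀ ∪ {f₀ x}).card
          ≤ ((s'.filter (G.Adj y)).image f₀).card + ({f₀ x} : Finset ℕ).card :=
            Finset.card_union_le _ _
        _ ≤ (s'.filter (G.Adj y)).card + 1 := by
            have := Finset.card_image_le (s := s'.filter (G.Adj y)) (f := f₀)
            simp only [Finset.card_singleton]
            omega
        _ = degS G s' y + 1 := by rw [degS_def]
        _ < k' := hdy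
    set f : V → ℕ := fun y =>
      if y = u then f₀ x
      else if h : (y ∈ s' ∧ degS G s' y + 1 < k') then (hpick y h).choose
      else f₀ y with hf
    have hfu : f u = f₀ x := by
      rw [hf]; dsimp only; rw [if_pos rfl]
    have hfC : ∀ y (h : y ∈ s' ∧ degS G s' y + 1 < k'), f y = (hpick y h).choose := by
      rintro y h
      have hyu : y ≠ u := (Finset.mem_erase.mp h.1).1
      rw [hf]; dsimp only; rw [if_neg hyu, dif_pos h]
    have hfO : ∀ y, y ≠ u → ¬ (y ∈ s' ∧ degS G s' y + 1 < k') → f y = f₀ y := by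
      intro y h1 h2
      rw [hf]; dsimp only; rw [if_neg h1, dif_neg h2]
    -- auxiliary: the u-vs-other case
    have auxu : ∀ b ∈ s, G.Adj u b → f u ≠ f b := by
      intro b hb hub
      have hbu : b ≠ u := fun h => G.irrefl (h ▸ hub)
      have hbs' : b ∈ s' := Finset.mem_erase.mpr ⟨hbu, hb⟩
      have hbx : b ≠ x := fun h => hadj (h ▸ hub)
      by_cases hC : (b ∈ s' ∧ degS G s' b + 1 < k')
      · rw [hfu, hfC b hC]
        intro hEq
        have hspec := (hpick b hC).choose_spec.2
        rw [Finset.mem_union] at hspec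
        push_neg at hspec
        exact hspec.2 (Finset.mem_singleton.mpr hEq.symm)
      · rw [hfu, hfO b hbu hC]
        have hdb : k' ≤ degS G s' b + 1 := by
          rcases Nat.lt_or_ge (degS G s' b + 1) k' with h | h
          · exact absurd ⟨hbs', h⟩ hC
          · exact h
        have hxb : G.Adj x b := F1 b hbs' hbx hdb
        exact hf₀p x hxs' b hbs' hxb
    -- properness
    have hproper : ∀ a ∈ s, ∀ b ∈ s, G.Adj a b → f a ≠ f b := by
      intro a ha b hb hab
      by_cases hau : a = u
      · subst hau; exact auxu b hb hab
      by_cases hbu : b = u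
      · subst hbu; exact (auxu a ha hab.symm).symm
      have has' : a ∈ s' := Finset.mem_erase.mpr ⟨hau, ha⟩
      have hbs' : b ∈ s' := Finset.mem_erase.mpr ⟨hbu, hb⟩
      by_cases haC : (a ∈ s' ∧ degS G s' a + 1 < k')
      · by_cases hbC : (b ∈ s' ∧ degS G s' b + 1 < k')
        · exact absurd hab (F2 a has' haC.2 b hbs' (by omega) hab.ne)
        · -- a low, b not: pick for a avoids color of its neighbor b
          rw [hfC a haC, hfO b hbu hbC]
          intro hEq
          have hspec := (hpick a haC).choose_spec.2
          rw [Finset.mem_union] at hspec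
          push_neg at hspec
          refine hspec.1 (Finset.mem_image.mpr ⟨b, Finset.mem_filter.mpr ⟨hbs', hab⟩, hEq.symm⟩)
      · by_cases hbC : (b ∈ s' ∧ degS G s' b + 1 < k')
        · rw [hfO a hau haC, hfC b hbC]
          intro hEq
          have hspec := (hpick b hbC).choose_spec.2
          rw [Finset.mem_union] at hspec
          push_neg at hspec
          exact hspec.1 (Finset.mem_image.mpr ⟨a, Finset.mem_filter.mpr ⟨has', hab.symm⟩, hEq⟩)
        · rw [hfO a hau haC, hfO b hbu hbC]
          exact hf₀p a has' b hbs' hab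
    -- bounds
    have hbounds : ∀ y ∈ s, f y < k' := by
      intro y hy
      by_cases hyu : y = u
      · subst hyu; rw [hfu]; exact hf₀b x hxs'
      by_cases hyC : (y ∈ s' ∧ degS G s' y + 1 < k')
      · rw [hfC y hyC]; exact (hpick y hyC).choose_spec.1
      · rw [hfO y hyu hyC]
        exact hf₀b y (Finset.mem_erase.mpr ⟨hyu, hy⟩)
    have : ColS G s k' := ⟨f, hbounds, hproper⟩
    have := chromS_le this
    omega


lemma colorable_iff_colS_univ (G : SimpleGraph V) (m : ℕ) :
    G.Colorable m ↔ ColS G Finset.univ m := by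
  constructor
  · rintro ⟨C⟩
    exact ⟨fun v => (C v).val, fun v _ => (C v).isLt,
      fun u _ v _ h hEq => C.valid h (Fin.ext hEq)⟩
  · rintro ⟨f, h1, h2⟩
    exact ⟨Coloring.mk (fun v => (⟨f v, h1 v (Finset.mem_univ v)⟩ : Fin m))
      (fun {v w} h hEq =>
        h2 v (Finset.mem_univ v) w (Finset.mem_univ w) h (congrArg Fin.val hEq))⟩

lemma chromNat_eq_chromS_univ (G : SimpleGraph V) : chromNat G = chromS G Finset.univ := by
  apply le_antisymm
  · have h1 : G.Colorable (chromS G Finset.univ) :=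
      (colorable_iff_colS_univ G _).mpr (chromS_colS G Finset.univ)
    have h2 := h1.chromaticNumber_le
    have h3 : G.chromaticNumber.toNat ≤ ((chromS G Finset.univ : ℕ) : ℕ∞).toNat :=
      ENat.toNat_le_toNat h2 (by simp)
    simpa [chromNat] using h3
  · apply chromS_le
    exact (colorable_iff_colS_univ G _).mp (colorable_chromaticNumber_of_fintype G)

lemma degS_univ (G : SimpleGraph V) [DecidableRel G.Adj] (v : V) :
    degS G Finset.univ v = G.degree v := by
  rw [degS_def, degree, neighborFinset_eq_filter]

/-- the structure theorem in absolute terms -/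
theorem structure_thm (G : SimpleGraph V) [DecidableRel G.Adj] (hNG : IsNG G) :
    ∀ u x : V, u ≠ x → chromNat G ≤ G.degree u → chromNat G ≤ G.degree x + 1 → G.Adj u x := by
  intro u x hne hu hx
  have hn : Nat.card V = (Finset.univ : Finset V).card := by
    rw [Nat.card_eq_fintype_card, Finset.card_univ]
  unfold IsNG at hNG
  rw [hn, chromNat_eq_chromS_univ, chromNat_eq_chromS_univ] at hNG
  refine Tthm (Finset.univ : Finset V).card Finset.univ rfl G hNG u (Finset.mem_univ u) x
    (Finset.mem_univ x) hne ?_ ?_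
  · rw [degS_univ, ← chromNat_eq_chromS_univ]; exact hu
  · rw [degS_univ, ← chromNat_eq_chromS_univ]; exact hx

lemma isNG_compl (G : SimpleGraph V) (hNG : IsNG G) : IsNG Gᶜ := by
  unfold IsNG at hNG ⊢
  rw [compl_compl]
  omega

lemma degree_add_compl (G : SimpleGraph V) [DecidableRel G.Adj] (v : V) :
    G.degree v + Gᶜ.degree v + 1 = Fintype.card V := by
  have := degS_add_compl G (Finset.mem_univ v)
  rw [degS_univ, degS_univ] at this
  rw [this, Finset.card_univ]

-- ## C5 decidable facts
def pat : Fin 5 → ℕ := ![0, 1, 0, 1, 2]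

-- properness of the pattern
lemma c5_pat_proper : ∀ i j, (cycleGraph 5).Adj i j → pat i ≠ pat j := by decide

lemma c5_pat_lt : ∀ i, pat i < 3 := by decide

-- rigidity: any adjacency-preserving permutation preserving pat is the identity
lemma c5_pat_rigid : ∀ σ : Equiv.Perm (Fin 5),
    (∀ i j, (cycleGraph 5).Adj (σ i) (σ j) ↔ (cycleGraph 5).Adj i j) →
    (∀ i, pat (σ i) = pat i) → ∀ i, σ i = i := by decide

-- every 2-coloring of C5 has a nontrivial color-preserving automorphism
lemma c5_two_col : ∀ g : Fin 5 → Fin 2, ∃ σ : Equiv.Perm (Fin 5),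
    (∀ i j, (cycleGraph 5).Adj (σ i) (σ j) ↔ (cycleGraph 5).Adj i j) ∧
    (∀ i, g (σ i) = g i) ∧ ∃ i, σ i ≠ i := by decide

-- the complement of C5 is isomorphic to C5 via doubling
def dbl : Equiv.Perm (Fin 5) := Equiv.mk ![0,2,4,1,3] ![0,3,1,4,2] (by decide) (by decide)

lemma c5_compl : ∀ i j, (cycleGraph 5)ᶜ.Adj (dbl i) (dbl j) ↔ (cycleGraph 5).Adj i j := by decide

-- ## twins and automorphisms


/-- swapping a pair of twins is an automorphism -/
def swapIso (G : SimpleGraph V) (u v : V)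
    (h : ∀ w, w ≠ u → w ≠ v → (G.Adj u w ↔ G.Adj v w)) : G ≃g G where
  toEquiv := Equiv.swap u v
  map_rel_iff' := by
    intro a b
    have h' : ∀ w, w ≠ u → w ≠ v → (G.Adj w u ↔ G.Adj w v) := by
      intro w h1 h2
      rw [G.adj_comm w u, G.adj_comm w v]
      exact h w h1 h2
    show G.Adj (Equiv.swap u v a) (Equiv.swap u v b) ↔ G.Adj a b
    by_cases hau : u = a
    · subst hau
      rw [Equiv.swap_apply_left]
      by_cases hbu : u = b
      · subst hbu; rw [Equiv.swap_apply_left]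
        constructor <;> (intro hh; exact absurd hh (G.irrefl))
      by_cases hbv : v = b
      · subst hbv; rw [Equiv.swap_apply_right]
        exact ⟨fun hh => hh.symm, fun hh => hh.symm⟩
      · rw [Equiv.swap_apply_of_ne_of_ne (Ne.symm hbu) (Ne.symm hbv)]
        exact (h b (Ne.symm hbu) (Ne.symm hbv)).symm
    by_cases hav : v = a
    · subst hav
      rw [Equiv.swap_apply_right]
      by_cases hbu : u = b
      · subst hbu; rw [Equiv.swap_apply_left]
        exact ⟨fun hh => hh.symm, fun hh => hh.symm⟩
      by_cases hbv : v = b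
      · subst hbv; rw [Equiv.swap_apply_right]
        constructor <;> (intro hh; exact absurd hh (G.irrefl))
      · rw [Equiv.swap_apply_of_ne_of_ne (Ne.symm hbu) (Ne.symm hbv)]
        exact h b (Ne.symm hbu) (Ne.symm hbv)
    · rw [Equiv.swap_apply_of_ne_of_ne (Ne.symm hau) (Ne.symm hav)]
      by_cases hbu : u = b
      · subst hbu; rw [Equiv.swap_apply_left]
        exact (h' a (Ne.symm hau) (Ne.symm hav)).symm
      by_cases hbv : v = b
      · subst hbv; rw [Equiv.swap_apply_right]
        exact h' a (Ne.symm hau) (Ne.symm hav)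
      · rw [Equiv.swap_apply_of_ne_of_ne (Ne.symm hbu) (Ne.symm hbv)]

lemma twin_ne {G : SimpleGraph V} {r : ℕ} {f : V → Fin r} (hd : IsDistinguishing G f)
    {u v : V} (hne : u ≠ v)
    (h : ∀ w, w ≠ u → w ≠ v → (G.Adj u w ↔ G.Adj v w)) (hcol : f u = f v) : False := by
  have hfix := hd (swapIso G u v h) ?_ u
  · have : (swapIso G u v h) u = v := Equiv.swap_apply_left u v
    rw [this] at hfix
    exact hne hfix.symm
  · intro w
    show f (Equiv.swap u v w) = f w
    by_cases hwu : u = w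
    · subst hwu; rw [Equiv.swap_apply_left]; exact hcol.symm
    by_cases hwv : v = w
    · subst hwv; rw [Equiv.swap_apply_right]; exact hcol
    · rw [Equiv.swap_apply_of_ne_of_ne (Ne.symm hwu) (Ne.symm hwv)]

/-- a distinguishing coloring uses at least as many colors as any set of mutual twins -/
lemma twins_card_le {G : SimpleGraph V} {r : ℕ} {f : V → Fin r}
    (hd : IsDistinguishing G f) (W : Finset V)
    (hW : ∀ u ∈ W, ∀ v ∈ W, u ≠ v → ∀ w, w ≠ u → w ≠ v → (G.Adj u w ↔ G.Adj v w)) :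
    W.card ≤ r := by
  have := Finset.card_le_card_of_injOn (s := W) (t := (Finset.univ : Finset (Fin r))) f
    (fun a _ => Finset.mem_univ (f a)) ?_
  · simpa using this
  · intro a ha b hb hEq
    by_contra hne
    exact twin_ne hd hne (hW a ha b hb hne) hEq

lemma iso_neighborFinset {G : SimpleGraph V} [DecidableRel G.Adj] (φ : G ≃g G) (v : V) :
    G.neighborFinset (φ v) = (G.neighborFinset v).image φ := by
  ext w
  simp only [mem_neighborFinset, Finset.mem_image]
  constructor
  · intro hadj
    have := φ.symm.map_adj_iff.mpr hadj
    refine ⟨φ.symm w, by simpa using this, by simp⟩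
  · rintro ⟨x, hx, rfl⟩
    exact φ.map_adj_iff.mpr hx

lemma iso_degree {G : SimpleGraph V} [DecidableRel G.Adj] (φ : G ≃g G) (v : V) :
    G.degree (φ v) = G.degree v := by
  rw [← card_neighborFinset_eq_degree, ← card_neighborFinset_eq_degree,
    iso_neighborFinset φ v]
  exact Finset.card_image_of_injective _ (Equiv.injective φ.toEquiv)



section Extend

variable {G : SimpleGraph V} {FA FB FC : Finset V}

/-- adjacency to a vertex outside `FA` only depends on which part the outside vertex is in -/
lemma adj_out (hpart : ∀ v : V, v ∈ FA ∨ v ∈ FB ∨ v ∈ FC)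
    (hBA : ∀ b ∈ FB, ∀ y, y ∈ FA ∨ y ∈ FB → b ≠ y → G.Adj b y)
    (hCA : ∀ c ∈ FC, ∀ y, y ∈ FA ∨ y ∈ FC → c ≠ y → ¬ G.Adj c y)
    {a a' b : V} (ha : a ∈ FA) (ha' : a' ∈ FA) (hb : b ∉ FA) :
    G.Adj a b ↔ G.Adj a' b := by
  have hba : b ≠ a := fun h => hb (h ▸ ha)
  have hba' : b ≠ a' := fun h => hb (h ▸ ha')
  rcases hpart b with h | h | h
  · exact absurd h hb
  · constructor <;> intro
    · exact (hBA b h a' (Or.inl ha') hba').symm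
    · exact (hBA b h a (Or.inl ha) hba).symm
  · constructor <;> intro hadj
    · exact absurd hadj.symm (hCA b h a (Or.inl ha) hba)
    · exact absurd hadj.symm (hCA b h a' (Or.inl ha') hba')

/-- extend an automorphism of the induced `C₅` to all of `G` by the identity -/
noncomputable def extendIso (hpart : ∀ v : V, v ∈ FA ∨ v ∈ FB ∨ v ∈ FC)
    (hBA : ∀ b ∈ FB, ∀ y, y ∈ FA ∨ y ∈ FB → b ≠ y → G.Adj b y)
    (hCA : ∀ c ∈ FC, ∀ y, y ∈ FA ∨ y ∈ FC → c ≠ y → ¬ G.Adj c y)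
    (σA : Equiv.Perm {x : V // x ∈ (FA : Set V)})
    (hσ : ∀ x y, (G.induce (FA : Set V)).Adj (σA x) (σA y) ↔ (G.induce (FA : Set V)).Adj x y) :
    G ≃g G where
  toEquiv := Equiv.Perm.subtypeCongr σA (Equiv.refl _)
  map_rel_iff' := by
    intro a b
    show G.Adj (Equiv.Perm.subtypeCongr σA (Equiv.refl _) a) _ ↔ _
    by_cases haA : a ∈ (FA : Set V)
    · rw [Equiv.Perm.subtypeCongr.left_apply _ _ haA]
      by_cases hbA : b ∈ (FA : Set V)
      · rw [Equiv.Perm.subtypeCongr.left_apply _ _ hbA]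
        exact (hσ ⟨a, haA⟩ ⟨b, hbA⟩)
      · rw [Equiv.Perm.subtypeCongr.right_apply _ _ hbA]
        simp only [Equiv.refl_apply]
        exact adj_out hpart hBA hCA (σA ⟨a, haA⟩).2 haA hbA
    · rw [Equiv.Perm.subtypeCongr.right_apply _ _ haA]
      simp only [Equiv.refl_apply]
      by_cases hbA : b ∈ (FA : Set V)
      · rw [Equiv.Perm.subtypeCongr.left_apply _ _ hbA]
        rw [G.adj_comm a _, G.adj_comm a b]
        exact adj_out hpart hBA hCA (σA ⟨b, hbA⟩).2 hbA haA
      · rw [Equiv.Perm.subtypeCongr.right_apply _ _ hbA]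
        simp

/-- any distinguishing coloring needs at least 3 colors -/
lemma three_le_of_distinguishing
    (hpart : ∀ v : V, v ∈ FA ∨ v ∈ FB ∨ v ∈ FC)
    (hBA : ∀ b ∈ FB, ∀ y, y ∈ FA ∨ y ∈ FB → b ≠ y → G.Adj b y)
    (hCA : ∀ c ∈ FC, ∀ y, y ∈ FA ∨ y ∈ FC → c ≠ y → ¬ G.Adj c y)
    (e : G.induce (FA : Set V) ≃g cycleGraph 5)
    {r : ℕ} (f : V → Fin r) (hf : IsDistinguishing G f) : 3 ≤ r := by
  by_contra hr
  push_neg at hr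
  have hr2 : r ≤ 2 := by omega
  set g : Fin 5 → Fin 2 := fun i => Fin.castLE hr2 (f ↑(e.symm i)) with hg
  obtain ⟨σ5, hσadj, hσcol, i0, hi0⟩ := c5_two_col g
  set σA : Equiv.Perm {x : V // x ∈ (FA : Set V)} :=
    (e.toEquiv.trans σ5).trans e.toEquiv.symm with hσA
  have hσAapp : ∀ x, σA x = e.symm (σ5 (e x)) := fun x => rfl
  have hσAadj : ∀ x y, (G.induce (FA : Set V)).Adj (σA x) (σA y) ↔
      (G.induce (FA : Set V)).Adj x y := by
    intro x y
    rw [hσAapp, hσAapp, e.symm.map_adj_iff, hσadj, e.map_adj_iff]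
  set φ := extendIso hpart hBA hCA σA hσAadj with hφ
  have hcol : ∀ v, f (φ v) = f v := by
    intro v
    show f (Equiv.Perm.subtypeCongr σA (Equiv.refl _) v) = f v
    by_cases hvA : v ∈ (FA : Set V)
    · rw [Equiv.Perm.subtypeCongr.left_apply _ _ hvA]
      have key : g (σ5 (e ⟨v, hvA⟩)) = g (e ⟨v, hvA⟩) := hσcol _
      rw [hg] at key
      simp only at key
      simp only [RelIso.symm_apply_apply] at key
      have : (e.symm (σ5 (e ⟨v, hvA⟩)) : V) = ↑(σA ⟨v, hvA⟩) := by rw [hσAapp]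
      rw [this] at key
      have hval := congrArg Fin.val key
      simp only [Fin.coe_castLE] at hval
      exact Fin.ext hval
    · rw [Equiv.Perm.subtypeCongr.right_apply _ _ hvA]
      rfl
  have hfix := hf φ hcol ↑(e.symm i0)
  have : φ ↑(e.symm i0) = ↑(σA (e.symm i0)) := by
    show Equiv.Perm.subtypeCongr σA (Equiv.refl _) ↑(e.symm i0) = _
    rw [Equiv.Perm.subtypeCongr.left_apply _ _ (e.symm i0).2]
  rw [this] at hfix
  have h1 : σA (e.symm i0) = e.symm i0 := Subtype.ext hfix
  rw [hσAapp] at h1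
  simp only [RelIso.apply_symm_apply] at h1
  exact hi0 (e.toEquiv.symm.injective h1)

end Extend

section Enum

/-- enumeration of a finset according to a fixed equiv -/
noncomputable def enum (ι : V ≃ Fin (Fintype.card V)) (s : Finset V) (v : V) : ℕ :=
  (s.filter (fun w => ι w < ι v)).card

lemma enum_lt (ι : V ≃ Fin (Fintype.card V)) {s : Finset V} {v : V} (hv : v ∈ s) :
    enum ι s v < s.card := by
  apply Finset.card_lt_card
  constructor
  · exact Finset.filter_subset _ _
  · intro hsub
    have := hsub hv
    simp only [Finset.mem_filter] at this
    exact absurd this.2 (lt_irrefl _)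

lemma enum_inj (ι : V ≃ Fin (Fintype.card V)) {s : Finset V} {u v : V} (hu : u ∈ s)
    (hv : v ∈ s) (h : enum ι s u = enum ι s v) : u = v := by
  rcases lt_trichotomy (ι u) (ι v) with hlt | hEq | hlt
  · exfalso
    have hss : s.filter (fun w => ι w < ι u) ⊂ s.filter (fun w => ι w < ι v) := by
      constructor
      · intro w hw
        rw [Finset.mem_filter] at hw ⊢
        exact ⟨hw.1, lt_trans hw.2 hlt⟩
      · intro hsub
        have := hsub (Finset.mem_filter.mpr ⟨hu, hlt⟩)
        simp only [Finset.mem_filter] at this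
        exact absurd this.2 (lt_irrefl _)
    have := Finset.card_lt_card hss
    unfold enum at h
    omega
  · exact ι.injective hEq
  · exfalso
    have hss : s.filter (fun w => ι w < ι v) ⊂ s.filter (fun w => ι w < ι u) := by
      constructor
      · intro w hw
        rw [Finset.mem_filter] at hw ⊢
        exact ⟨hw.1, lt_trans hw.2 hlt⟩
      · intro hsub
        have := hsub (Finset.mem_filter.mpr ⟨hv, hlt⟩)
        simp only [Finset.mem_filter] at this
        exact absurd this.2 (lt_irrefl _)
    have := Finset.card_lt_card hss
    unfold enum at h
    omega

end Enum

/-- extra colors needed by the `C`-side twin classes -/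
noncomputable def eN (G : SimpleGraph V) [DecidableRel G.Adj] (FB FC : Finset V) : ℕ :=
  FC.sup (fun c => (FC.filter (fun c' => G.neighborFinset c' = G.neighborFinset c)).card
      - (3 + (FB \ G.neighborFinset c).card))

theorem coloring_exists (G : SimpleGraph V) [DecidableRel G.Adj] (FA FB FC : Finset V)
    (hpart : ∀ v : V, v ∈ FA ∨ v ∈ FB ∨ v ∈ FC)
    (hAB : ∀ v, v ∈ FA → v ∈ FB → False) (hAC : ∀ v, v ∈ FA → v ∈ FC → False)
    (hBC : ∀ v, v ∈ FB → v ∈ FC → False)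
    (hBA : ∀ b ∈ FB, ∀ y, y ∈ FA ∨ y ∈ FB → b ≠ y → G.Adj b y)
    (hCA : ∀ c ∈ FC, ∀ y, y ∈ FA ∨ y ∈ FC → c ≠ y → ¬ G.Adj c y)
    (e : G.induce (FA : Set V) ≃g cycleGraph 5) :
    ∃ f : V → ℕ,
      (∀ v, f v < 3 + FB.card + eN G FB FC) ∧
      (∀ u v, G.Adj u v → f u ≠ f v) ∧
      (∀ φ : G ≃g G, (∀ v, v ∈ FA → φ v ∈ FA) → (∀ v, v ∈ FB → φ v ∈ FB) →
        (∀ v, v ∈ FC → φ v ∈ FC) → (∀ v, f (φ v) = f v) → ∀ v, φ v = v) := by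
  classical
  set ι := Fintype.equivFin V with hι
  set N := fun v => G.neighborFinset v with hN
  set Q : V → Finset V := fun c => FC.filter (fun c' => N c' = N c) with hQ
  set E := eN G FB FC with hE
  set PAL : V → Finset ℕ := fun c =>
    (({0, 1, 2} : Finset ℕ) ∪ (FB \ N c).image (fun b => 3 + enum ι FB b))
      ∪ (Finset.range E).image (fun i => 3 + FB.card + i) with hPAL
  have hPAL_lt : ∀ c, ∀ z ∈ PAL c, z < 3 + FB.card + E := by
    intro c z hz
    rw [hPAL] at hz
    simp only [Finset.mem_union, Finset.mem_image, Finset.mem_insert, Finset.mem_singleton,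
      Finset.mem_range, Finset.mem_sdiff] at hz
    rcases hz with (hz | ⟨b, ⟨hb, -⟩, rfl⟩) | ⟨i, hi, rfl⟩
    · rcases hz with rfl | rfl | rfl <;> omega
    · have := enum_lt ι hb
      omega
    · omega
  have hPAL_card : ∀ c, 3 + (FB \ N c).card + E ≤ (PAL c).card := by
    intro c
    rw [hPAL]
    dsimp only
    have h1 : (({0, 1, 2} : Finset ℕ) ∪ (FB \ N c).image (fun b => 3 + enum ι FB b)).card
        = 3 + (FB \ N c).card := by
      rw [Finset.card_union_of_disjoint]
      · have himg : ((FB \ N c).image (fun b => 3 + enum ι FB b)).card = (FB \ N c).card := by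
          apply Finset.card_image_of_injOn
          intro a ha b hb hEq
          simp only [Finset.coe_sdiff, Set.mem_diff, Finset.mem_coe] at ha hb
          dsimp only at hEq
          exact enum_inj ι ha.1 hb.1 (by omega)
        rw [himg]
        have h3 : ({0, 1, 2} : Finset ℕ).card = 3 := by decide
        omega
      · rw [Finset.disjoint_left]
        intro z hz hz2
        simp only [Finset.mem_insert, Finset.mem_singleton] at hz
        simp only [Finset.mem_image] at hz2
        obtain ⟨b, -, hEq⟩ := hz2
        omega
    rw [Finset.card_union_of_disjoint]
    · rw [h1]
      have : ((Finset.range E).image (fun i => 3 + FB.card + i)).card = E := by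
        rw [Finset.card_image_of_injOn (fun a _ b _ h => by omega), Finset.card_range]
      omega
    · rw [Finset.disjoint_left]
      intro z hz hz2
      simp only [Finset.mem_union, Finset.mem_image, Finset.mem_insert, Finset.mem_singleton,
        Finset.mem_sdiff] at hz
      simp only [Finset.mem_image, Finset.mem_range] at hz2
      obtain ⟨i, -, hEq⟩ := hz2
      rcases hz with (hz | ⟨b, ⟨hb, -⟩, rfl⟩)
      · rcases hz with rfl | rfl | rfl <;> omega
      · have := enum_lt ι hb
        omega
  have hcQ : ∀ c, c ∈ FC → c ∈ Q c := by
    intro c hc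
    rw [hQ]
    exact Finset.mem_filter.mpr ⟨hc, rfl⟩
  have hQle : ∀ c ∈ FC, (Q c).card ≤ (PAL c).card := by
    intro c hc
    have hsup : (Q c).card - (3 + (FB \ N c).card) ≤ E := by
      rw [hE]
      exact Finset.le_sup (f := fun c => (FC.filter
        (fun c' => G.neighborFinset c' = G.neighborFinset c)).card
          - (3 + (FB \ G.neighborFinset c).card)) hc
    have := hPAL_card c
    omega
  -- the coloring
  set fC : V → ℕ := fun c => ((PAL c).sort (· ≤ ·)).getD (enum ι (Q c) c) 0 with hfCdef
  set f : V → ℕ := fun v =>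
    if h : v ∈ FA then pat (e ⟨v, h⟩)
    else if v ∈ FB then 3 + enum ι FB v
    else fC v with hf
  have hfA : ∀ (v) (h : v ∈ FA), f v = pat (e ⟨v, h⟩) := by
    intro v h
    rw [hf]; dsimp only; rw [dif_pos h]
  have hfB : ∀ (v), v ∈ FB → f v = 3 + enum ι FB v := by
    intro v h
    have h1 : v ∉ FA := fun h' => hAB v h' h
    rw [hf]; dsimp only; rw [dif_neg h1, if_pos h]
  have hfCv : ∀ (v), v ∈ FC → f v = fC v := by
    intro v h
    have h1 : v ∉ FA := fun h' => hAC v h' h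
    have h2 : v ∉ FB := fun h' => hBC v h' h
    rw [hf]; dsimp only; rw [dif_neg h1, if_neg h2]
  have hidx : ∀ c ∈ FC, enum ι (Q c) c < ((PAL c).sort (· ≤ ·)).length := by
    intro c hc
    rw [Finset.length_sort]
    exact lt_of_lt_of_le (enum_lt ι (hcQ c hc)) (hQle c hc)
  have hfC_mem : ∀ c ∈ FC, f c ∈ PAL c := by
    intro c hc
    rw [hfCv c hc, hfCdef]
    dsimp only
    rw [List.getD_eq_get _ _ ⟨_, hidx c hc⟩]
    exact (Finset.mem_sort _).mp (List.get_mem _ _)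
  have hfC_inj : ∀ c ∈ FC, ∀ c' ∈ FC, N c' = N c → f c = f c' → c = c' := by
    intro c hc c' hc' hNN hEq
    have hQeq : Q c' = Q c := by
      rw [hQ]; dsimp only; rw [hNN]
    have hPALeq : PAL c' = PAL c := by
      rw [hPAL]; dsimp only; rw [hNN]
    rw [hfCv c hc, hfCv c' hc', hfCdef] at hEq
    dsimp only at hEq
    rw [hQeq, hPALeq] at hEq
    rw [List.getD_eq_get _ _ ⟨_, hidx c hc⟩] at hEq
    have hidx' : enum ι (Q c) c' < ((PAL c).sort (· ≤ ·)).length := by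
      rw [Finset.length_sort]
      exact lt_of_lt_of_le (enum_lt ι (by rw [← hQeq]; exact hcQ c' hc')) (hQle c hc)
    rw [List.getD_eq_get _ _ ⟨_, hidx'⟩] at hEq
    have hnodup := Finset.sort_nodup (PAL c) (· ≤ ·)
    have hij := (List.Nodup.get_inj_iff hnodup).mp hEq
    have henum : enum ι (Q c) c = enum ι (Q c) c' := congrArg Fin.val hij
    exact enum_inj ι (hcQ c hc) (by rw [← hQeq]; exact hcQ c' hc') henum
  refine ⟨f, ?_, ?_, ?_⟩
  · -- bounds
    intro v
    rcases hpart v with h | h | h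
    · rw [hfA v h]
      have := c5_pat_lt (e ⟨v, h⟩)
      omega
    · rw [hfB v h]
      have := enum_lt ι h
      omega
    · exact hPAL_lt v (f v) (hfC_mem v h)
  · -- properness
    intro u v hadj
    have hne : u ≠ v := hadj.ne
    rcases hpart u with hu | hu | hu <;> rcases hpart v with hv | hv | hv
    · -- A A
      rw [hfA u hu, hfA v hv]
      apply c5_pat_proper
      exact e.map_adj_iff.mpr hadj
    · -- A B
      rw [hfA u hu, hfB v hv]
      have := c5_pat_lt (e ⟨u, hu⟩)
      omega
    · -- A C : impossible
      exact absurd hadj.symm (hCA v hv u (Or.inl hu) (fun h => hne h.symm))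
    · -- B A
      rw [hfB u hu, hfA v hv]
      have := c5_pat_lt (e ⟨v, hv⟩)
      omega
    · -- B B
      rw [hfB u hu, hfB v hv]
      intro hEq
      exact hne (enum_inj ι hu hv (by omega))
    · -- B C
      rw [hfB u hu]
      have hmem := hfC_mem v hv
      rw [hPAL] at hmem
      simp only [Finset.mem_union, Finset.mem_image, Finset.mem_insert, Finset.mem_singleton,
        Finset.mem_range, Finset.mem_sdiff] at hmem
      rcases hmem with (hz | ⟨b, ⟨hb, hbN⟩, hEq⟩) | ⟨i, hi, hEq⟩
      · rcases hz with h3 | h3 | h3 <;> omega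
      · rw [← hEq]
        intro hcon
        have hbu : b = u := enum_inj ι hb hu (by omega)
        subst hbu
        exact hbN (by rw [hN]; exact (mem_neighborFinset ..).mpr hadj.symm)
      · have := enum_lt ι hu
        omega
    · -- C A : impossible
      exact absurd hadj (hCA u hu v (Or.inl hv) hne)
    · -- C B (symmetric to B C)
      rw [hfB v hv]
      have hmem := hfC_mem u hu
      rw [hPAL] at hmem
      simp only [Finset.mem_union, Finset.mem_image, Finset.mem_insert, Finset.mem_singleton,
        Finset.mem_range, Finset.mem_sdiff] at hmem
      rcases hmem with (hz | ⟨b, ⟨hb, hbN⟩, hEq⟩) | ⟨i, hi, hEq⟩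
      · rcases hz with h3 | h3 | h3 <;> omega
      · rw [← hEq]
        intro hcon
        have hbu : b = v := enum_inj ι hb hv (by omega)
        subst hbu
        exact hbN (by rw [hN]; exact (mem_neighborFinset ..).mpr hadj)
      · have := enum_lt ι hv
        omega
    · -- C C : impossible
      exact absurd hadj (hCA u hu v (Or.inr hv) hne)
  · -- distinguishing
    intro φ hφA hφB hφC hcol
    have stepB : ∀ b, b ∈ FB → φ b = b := by
      intro b hb
      have h1 := hcol b
      rw [hfB _ (hφB b hb), hfB _ hb] at h1
      exact enum_inj ι (hφB b hb) hb (by omega)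
    have hiff : ∀ x, x ∈ (FA : Set V) ↔ φ.toEquiv x ∈ (FA : Set V) := by
      intro x
      constructor
      · intro h; exact hφA x h
      · intro h
        rcases hpart x with hx | hx | hx
        · exact hx
        · exact absurd (hφB x hx) (fun hh => hAB _ h hh)
        · exact absurd (hφC x hx) (fun hh => hAC _ h hh)
    set σV : Equiv.Perm {x : V // x ∈ (FA : Set V)} := Equiv.Perm.subtypePerm φ.toEquiv (fun x => (hiff x).symm)
      with hσV
    have hσVapp : ∀ x : {x : V // x ∈ (FA : Set V)}, (σV x : V) = φ ↑x := fun x => rfl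
    set σ5 : Equiv.Perm (Fin 5) := (e.toEquiv.symm.trans σV).trans e.toEquiv with hσ5
    have hσ5app : ∀ i, σ5 i = e (σV (e.symm i)) := fun i => rfl
    have hadj5 : ∀ i j, (cycleGraph 5).Adj (σ5 i) (σ5 j) ↔ (cycleGraph 5).Adj i j := by
      intro i j
      rw [hσ5app, hσ5app, e.map_adj_iff]
      have h1 : (G.induce (FA : Set V)).Adj (σV (e.symm i)) (σV (e.symm j)) ↔
          (G.induce (FA : Set V)).Adj (e.symm i) (e.symm j) := by
        show G.Adj (σV (e.symm i) : V) (σV (e.symm j) : V) ↔ _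
        rw [hσVapp, hσVapp]
        exact φ.map_adj_iff
      rw [h1, e.symm.map_adj_iff]
    have hcol5 : ∀ i, pat (σ5 i) = pat i := by
      intro i
      rw [hσ5app]
      have h1 : pat (e (σV (e.symm i))) = f ↑(σV (e.symm i)) := by
        rw [hfA _ (σV (e.symm i)).2]
      have h2 : pat i = f ↑(e.symm i) := by
        rw [hfA _ (e.symm i).2]
        congr 1
        simp only [Subtype.coe_eta]
        exact (RelIso.apply_symm_apply e i).symm
      rw [h1, h2, hσVapp]
      exact hcol _
    have hrigid := c5_pat_rigid σ5 hadj5 hcol5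
    have stepA : ∀ a, a ∈ FA → φ a = a := by
      intro a ha
      have h1 := hrigid (e ⟨a, ha⟩)
      rw [hσ5app] at h1
      rw [RelIso.symm_apply_apply] at h1
      have h2 : σV ⟨a, ha⟩ = ⟨a, ha⟩ :=
        e.toEquiv.injective (show e.toEquiv _ = e.toEquiv _ from h1)
      have h3 := congrArg (Subtype.val) h2
      rw [hσVapp] at h3
      exact h3
    have stepC : ∀ c, c ∈ FC → φ c = c := by
      intro c hc
      have hNsub : N c ⊆ FB := by
        intro w hw
        rw [hN] at hw
        have hadj : G.Adj c w := (mem_neighborFinset ..).mp hw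
        rcases hpart w with h | h | h
        · exact absurd hadj (hCA c hc w (Or.inl h) hadj.ne)
        · exact h
        · exact absurd hadj (hCA c hc w (Or.inr h) hadj.ne)
      have hNφ : N (φ c) = N c := by
        show G.neighborFinset (φ c) = G.neighborFinset c
        rw [iso_neighborFinset φ c]
        have h2 : (G.neighborFinset c).image ⇑φ = (G.neighborFinset c).image id :=
          Finset.image_congr (fun w hw => stepB w (hNsub hw))
        rw [h2, Finset.image_id]
      have := hfC_inj c hc (φ c) (hφC c hc) hNφ (hcol c).symm
      exact this.symm
    intro v
    rcases hpart v with h | h | h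
    · exact stepA v h
    · exact stepB v h
    · exact stepC v h


lemma twin_cond_of_nbr_eq (G : SimpleGraph V) [DecidableRel G.Adj] {u v w : V}
    (h : G.neighborFinset u = G.neighborFinset v) (hwu : w ≠ u) (hwv : w ≠ v) :
    (G.Adj u w ↔ G.Adj v w) := by
  rw [← mem_neighborFinset, ← mem_neighborFinset, h]

lemma eN_pos_witness (G : SimpleGraph V) [DecidableRel G.Adj] (FB FC : Finset V)
    (h : 0 < eN G FB FC) : ∃ c ∈ FC,
      (FC.filter (fun c' => G.neighborFinset c' = G.neighborFinset c)).card
        = eN G FB FC + 3 + (FB \ G.neighborFinset c).card := by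
  have hne : FC.Nonempty := by
    rcases FC.eq_empty_or_nonempty with rfl | hne
    · rw [eN] at h; simp at h
    · exact hne
  obtain ⟨c, hc, hEq⟩ := Finset.exists_mem_eq_sup FC hne
    (fun c => (FC.filter (fun c' => G.neighborFinset c' = G.neighborFinset c)).card
      - (3 + (FB \ G.neighborFinset c).card))
  rw [eN] at h ⊢
  rw [hEq] at h ⊢
  exact ⟨c, hc, by omega⟩

theorem key_count (G : SimpleGraph V) [DecidableRel G.Adj] (FB FC : Finset V) {D : ℕ}
    (hD3 : 3 ≤ D)
    (htw : ∀ W : Finset V, (∀ u ∈ W, ∀ v ∈ W, u ≠ v → ∀ w, w ≠ u → w ≠ v →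
        (G.Adj u w ↔ G.Adj v w)) → W.card ≤ D)
    (hBC : ∀ v, v ∈ FB → v ∈ FC → False) :
    eN G FB FC + eN Gᶜ FC FB + 2 ≤ D := by
  set e1 := eN G FB FC with he1
  set e2 := eN Gᶜ FC FB with he2
  -- twin classes bounded by D
  have htwG : ∀ c : V, (FC.filter (fun c' => G.neighborFinset c' = G.neighborFinset c)).card
      ≤ D := by
    intro c
    apply htw
    intro u hu v hv hne w hwu hwv
    rw [Finset.mem_filter] at hu hv
    exact twin_cond_of_nbr_eq G (hu.2.trans hv.2.symm) hwu hwv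
  have htwGc : ∀ b : V, (FB.filter (fun b' => Gᶜ.neighborFinset b' = Gᶜ.neighborFinset b)).card
      ≤ D := by
    intro b
    apply htw
    intro u hu v hv hne w hwu hwv
    rw [Finset.mem_filter] at hu hv
    have hcc := twin_cond_of_nbr_eq Gᶜ (hu.2.trans hv.2.symm) hwu hwv
    rw [compl_adj, compl_adj] at hcc
    constructor
    · intro hadj
      by_contra hnadj
      exact (hcc.mpr ⟨fun hh => hwv hh.symm, hnadj⟩).2 hadj
    · intro hadj
      by_contra hnadj
      exact (hcc.mp ⟨fun hh => hwu hh.symm, hnadj⟩).2 hadj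
  rcases Nat.eq_zero_or_pos e1 with h1 | h1
  · rcases Nat.eq_zero_or_pos e2 with h2 | h2
    · omega
    · obtain ⟨b, hb, hEq⟩ := eN_pos_witness Gᶜ FC FB h2
      have := htwGc b
      rw [hEq] at this
      omega
  · rcases Nat.eq_zero_or_pos e2 with h2 | h2
    · obtain ⟨c, hc, hEq⟩ := eN_pos_witness G FB FC h1
      have := htwG c
      rw [hEq] at this
      omega
    · obtain ⟨c, hc, hEqc⟩ := eN_pos_witness G FB FC h1
      obtain ⟨b, hb, hEqb⟩ := eN_pos_witness Gᶜ FC FB h2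
      have hbc : b ≠ c := fun h => hBC b hb (h ▸ hc)
      by_cases hadj : G.Adj c b
      · -- Q(c) ⊆ FC \ Gᶜ.neighborFinset b
        have hsub : FC.filter (fun c' => G.neighborFinset c' = G.neighborFinset c)
            ⊆ FC \ Gᶜ.neighborFinset b := by
          intro c' hc'
          rw [Finset.mem_filter] at hc'
          rw [Finset.mem_sdiff]
          refine ⟨hc'.1, ?_⟩
          rw [mem_neighborFinset]
          intro hcon
          rw [compl_adj] at hcon
          apply hcon.2
          have : b ∈ G.neighborFinset c' := by
            rw [hc'.2, mem_neighborFinset]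
            exact hadj
          exact ((mem_neighborFinset ..).mp this).symm
        have hcard := Finset.card_le_card hsub
        have := htwGc b
        rw [hEqb] at this
        rw [hEqc] at hcard
        omega
      · -- Q(b) ⊆ FB \ G.neighborFinset c
        have hsub : FB.filter (fun b' => Gᶜ.neighborFinset b' = Gᶜ.neighborFinset b)
            ⊆ FB \ G.neighborFinset c := by
          intro b' hb'
          rw [Finset.mem_filter] at hb'
          rw [Finset.mem_sdiff]
          refine ⟨hb'.1, ?_⟩
          rw [mem_neighborFinset]
          intro hcon
          have hmem : c ∈ Gᶜ.neighborFinset b' := by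
            rw [hb'.2, mem_neighborFinset]
            rw [compl_adj]
            exact ⟨hbc, fun hh => hadj hh.symm⟩
          have := (mem_neighborFinset ..).mp hmem
          rw [compl_adj] at this
          exact this.2 hcon.symm
        have hcard := Finset.card_le_card hsub
        have := htwG c
        rw [hEqc] at this
        rw [hEqb] at hcard
        omega


end NGaux

/-- No Type 3 NG-graph is an NGD-graph: if `G[A_G]` is a 5-cycle then
`χ_D(G) + χ_D(Ḡ) < n + D(G)`. -/
theorem stmt18 (G : SimpleGraph V) [DecidableRel G.Adj] (hNG : IsNG G)
    (hT3 : Nonempty (G.induce (setA G) ≃g cycleGraph 5)) :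
    distChromNum G + distChromNum Gᶜ < Fintype.card V + distNum G := by
  obtain ⟨e0⟩ := hT3
  set n := Fintype.card V with hn
  set k := chromNat G with hk
  set kb := chromNat Gᶜ with hkb
  have hNG' : k + kb = n + 1 := by
    have := hNG
    unfold IsNG at this
    rwa [Nat.card_eq_fintype_card] at this
  have hvne : Nonempty V := ⟨↑(e0.symm 0)⟩
  have hk1 : 1 ≤ k := by
    rw [hk, NGaux.chromNat_eq_chromS_univ]
    exact NGaux.chromS_pos ⟨Classical.arbitrary V, Finset.mem_univ _⟩
  have hkb1 : 1 ≤ kb := by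
    rw [hkb, NGaux.chromNat_eq_chromS_univ]
    exact NGaux.chromS_pos ⟨Classical.arbitrary V, Finset.mem_univ _⟩
  haveI : DecidablePred (fun v => v ∈ setA G) :=
    fun v => decidable_of_iff (G.degree v = chromNat G - 1) Iff.rfl
  haveI : DecidablePred (fun v => v ∈ setB G) :=
    fun v => decidable_of_iff (G.degree v > chromNat G - 1) Iff.rfl
  haveI : DecidablePred (fun v => v ∈ setC G) :=
    fun v => decidable_of_iff (G.degree v < chromNat G - 1) Iff.rfl
  -- the three degree classes as finsets
  set FA := Finset.univ.filter (fun v => v ∈ setA G) with hFA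
  set FB := Finset.univ.filter (fun v => v ∈ setB G) with hFB
  set FC := Finset.univ.filter (fun v => v ∈ setC G) with hFC
  have hmemA : ∀ v, v ∈ FA ↔ G.degree v + 1 = k := by
    intro v
    rw [hFA]
    simp only [Finset.mem_filter, Finset.mem_univ, true_and, setA, Set.mem_setOf_eq, ← hk]
    omega
  have hmemB : ∀ v, v ∈ FB ↔ k ≤ G.degree v := by
    intro v
    rw [hFB]
    simp only [Finset.mem_filter, Finset.mem_univ, true_and, setB, Set.mem_setOf_eq, ← hk]
    omega
  have hmemC : ∀ v, v ∈ FC ↔ G.degree v + 2 ≤ k := by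
    intro v
    rw [hFC]
    simp only [Finset.mem_filter, Finset.mem_univ, true_and, setC, Set.mem_setOf_eq, ← hk]
    omega
  have hpart : ∀ v : V, v ∈ FA ∨ v ∈ FB ∨ v ∈ FC := by
    intro v
    rw [hmemA, hmemB, hmemC]
    omega
  have hAB : ∀ v, v ∈ FA → v ∈ FB → False := by
    intro v h1 h2; rw [hmemA] at h1; rw [hmemB] at h2; omega
  have hAC : ∀ v, v ∈ FA → v ∈ FC → False := by
    intro v h1 h2; rw [hmemA] at h1; rw [hmemC] at h2; omega
  have hBC : ∀ v, v ∈ FB → v ∈ FC → False := by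
    intro v h1 h2; rw [hmemB] at h1; rw [hmemC] at h2; omega
  have hdc : ∀ v, G.degree v + Gᶜ.degree v + 1 = n := fun v => NGaux.degree_add_compl G v
  -- structure
  have HB : ∀ b ∈ FB, ∀ y, y ∈ FA ∨ y ∈ FB → b ≠ y → G.Adj b y := by
    intro b hb y hy hne
    rw [hmemB] at hb
    apply NGaux.structure_thm G hNG b y hne
    · rw [← hk]; exact hb
    · rw [← hk]
      rcases hy with h | h
      · rw [hmemA] at h; omega
      · rw [hmemB] at h; omega
  have HCc : ∀ c ∈ FC, ∀ y, y ∈ FA ∨ y ∈ FC → c ≠ y → Gᶜ.Adj c y := by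
    intro c hc y hy hne
    rw [hmemC] at hc
    apply NGaux.structure_thm Gᶜ (NGaux.isNG_compl G hNG) c y hne
    · rw [← hkb]
      have := hdc c
      omega
    · rw [← hkb]
      have := hdc y
      rcases hy with h | h
      · rw [hmemA] at h; omega
      · rw [hmemC] at h; omega
  have HC : ∀ c ∈ FC, ∀ y, y ∈ FA ∨ y ∈ FC → c ≠ y → ¬ G.Adj c y := by
    intro c hc y hy hne
    exact ((compl_adj G c y).mp (HCc c hc y hy hne)).2
  -- the C5 isomorphism on FA
  have hset : (FA : Set V) = setA G := by
    ext v
    rw [hFA]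
    simp only [Finset.coe_filter, Finset.mem_univ, true_and, Set.mem_setOf_eq]
  have iso1 : G.induce (FA : Set V) ≃g G.induce (setA G) :=
    ⟨Equiv.setCongr hset, Iff.rfl⟩
  have e : G.induce (FA : Set V) ≃g cycleGraph 5 := iso1.trans e0
  -- the complement side isomorphism
  have hcompl_induce : Gᶜ.induce (FA : Set V) = (G.induce (FA : Set V))ᶜ := by
    ext a b
    show Gᶜ.Adj ↑a ↑b ↔ _
    rw [compl_adj, compl_adj]
    constructor
    · rintro ⟨h1, h2⟩
      exact ⟨fun hh => h1 (congrArg Subtype.val hh), h2⟩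
    · rintro ⟨h1, h2⟩
      exact ⟨fun hh => h1 (Subtype.ext hh), h2⟩
  have isoCompl : (G.induce (FA : Set V))ᶜ ≃g (cycleGraph 5)ᶜ := by
    refine ⟨e.toEquiv, ?_⟩
    intro a b
    show (cycleGraph 5)ᶜ.Adj (e a) (e b) ↔ _
    rw [compl_adj, compl_adj]
    constructor
    · rintro ⟨h1, h2⟩
      exact ⟨fun hh => h1 (congrArg e hh), fun hh => h2 (e.map_adj_iff.mpr hh)⟩
    · rintro ⟨h1, h2⟩
      exact ⟨fun hh => h1 (e.toEquiv.injective hh), fun hh => h2 (e.map_adj_iff.mp hh)⟩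
  have dblIso : cycleGraph 5 ≃g (cycleGraph 5)ᶜ :=
    ⟨NGaux.dbl, fun {a b} => NGaux.c5_compl a b⟩
  have eCast : Gᶜ.induce (FA : Set V) ≃g (G.induce (FA : Set V))ᶜ := by
    rw [hcompl_induce]
  have eC : Gᶜ.induce (FA : Set V) ≃g cycleGraph 5 :=
    (eCast.trans isoCompl).trans dblIso.symm
  -- the two colorings
  obtain ⟨f1, hf1b, hf1p, hf1d⟩ := NGaux.coloring_exists G FA FB FC hpart hAB hAC hBC HB HC e
  have hBA' : ∀ b ∈ FC, ∀ y, y ∈ FA ∨ y ∈ FC → b ≠ y → Gᶜ.Adj b y := HCc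
  have hCA' : ∀ c ∈ FB, ∀ y, y ∈ FA ∨ y ∈ FB → c ≠ y → ¬ Gᶜ.Adj c y := by
    intro c hc y hy hne hcon
    rw [compl_adj] at hcon
    exact hcon.2 (HB c hc y hy hne)
  have hpart' : ∀ v : V, v ∈ FA ∨ v ∈ FC ∨ v ∈ FB := by
    intro v; rcases hpart v with h | h | h <;> tauto
  obtain ⟨f2, hf2b, hf2p, hf2d⟩ := NGaux.coloring_exists Gᶜ FA FC FB hpart'
    hAC hAB (fun v h1 h2 => hBC v h2 h1) hBA' hCA' eC
  -- distinguishing number facts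
  set D := distNum G with hD
  have hDmem : ∃ f : V → Fin D, IsDistinguishing G f := by
    have hne : {r : ℕ | ∃ f : V → Fin r, IsDistinguishing G f}.Nonempty := by
      refine ⟨Fintype.card V, fun v => Fintype.equivFin V v, ?_⟩
      intro φ hφ v
      exact (Fintype.equivFin V).injective (hφ v)
    exact Nat.sInf_mem hne
  obtain ⟨fD, hfD⟩ := hDmem
  have hD3 : 3 ≤ D := NGaux.three_le_of_distinguishing hpart HB HC e fD hfD
  have htw : ∀ W : Finset V, (∀ u ∈ W, ∀ v ∈ W, u ≠ v → ∀ w, w ≠ u → w ≠ v →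
      (G.Adj u w ↔ G.Adj v w)) → W.card ≤ D :=
    fun W hW => NGaux.twins_card_le hfD W hW
  have hkey : NGaux.eN G FB FC + NGaux.eN Gᶜ FC FB + 2 ≤ D :=
    NGaux.key_count G FB FC hD3 htw hBC
  -- cardinalities
  have hcardA : FA.card = 5 := by
    have h1 : Fintype.card {x // x ∈ setA G} = 5 := by
      rw [Fintype.card_congr e0.toEquiv, Fintype.card_fin]
    rw [← h1, Fintype.card_subtype]
  have hcardV : n = FA.card + FB.card + FC.card := by
    have hU : (Finset.univ : Finset V) = (FA ∪ FB) ∪ FC := by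
      ext v
      simp only [Finset.mem_univ, Finset.mem_union, true_iff]
      rcases hpart v with h | h | h <;> tauto
    have hd1 : Disjoint FA FB := by
      rw [Finset.disjoint_left]; exact fun v h1 h2 => hAB v h1 h2
    have hd2 : Disjoint (FA ∪ FB) FC := by
      rw [Finset.disjoint_left]
      intro v h1 h2
      rcases Finset.mem_union.mp h1 with h | h
      · exact hAC v h h2
      · exact hBC v h h2
    rw [hn, ← Finset.card_univ, hU, Finset.card_union_of_disjoint hd2,
      Finset.card_union_of_disjoint hd1]
  -- upper bound on distChromNum G
  have hub1 : distChromNum G ≤ 3 + FB.card + NGaux.eN G FB FC := by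
    apply Nat.sInf_le
    refine ⟨fun v => ⟨f1 v, hf1b v⟩, ?_, ?_⟩
    · intro u v hadj hEq
      exact hf1p u v hadj (congrArg Fin.val hEq)
    · intro φ hφ v
      have hdeg : ∀ w, G.degree (φ w) = G.degree w := fun w => NGaux.iso_degree φ w
      refine hf1d φ ?_ ?_ ?_ (fun w => congrArg Fin.val (hφ w)) v
      · intro w hw; rw [hmemA] at hw ⊢; rw [hdeg w]; exact hw
      · intro w hw; rw [hmemB] at hw ⊢; rw [hdeg w]; exact hw
      · intro w hw; rw [hmemC] at hw ⊢; rw [hdeg w]; exact hw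
  -- upper bound on distChromNum Gᶜ
  have hmemA' : ∀ v, v ∈ FA ↔ Gᶜ.degree v + k = n := by
    intro v; rw [hmemA]; have := hdc v; omega
  have hmemB' : ∀ v, v ∈ FB ↔ Gᶜ.degree v + k + 1 ≤ n := by
    intro v; rw [hmemB]; have := hdc v; omega
  have hmemC' : ∀ v, v ∈ FC ↔ n + 1 ≤ Gᶜ.degree v + k := by
    intro v; rw [hmemC]; have := hdc v; omega
  have hub2 : distChromNum Gᶜ ≤ 3 + FC.card + NGaux.eN Gᶜ FC FB := by
    apply Nat.sInf_le
    refine ⟨fun v => ⟨f2 v, hf2b v⟩, ?_, ?_⟩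
    · intro u v hadj hEq
      exact hf2p u v hadj (congrArg Fin.val hEq)
    · intro φ hφ v
      have hdeg : ∀ w, Gᶜ.degree (φ w) = Gᶜ.degree w := fun w => NGaux.iso_degree φ w
      refine hf2d φ ?_ ?_ ?_ (fun w => congrArg Fin.val (hφ w)) v
      · intro w hw; rw [hmemA'] at hw ⊢; rw [hdeg w]; exact hw
      · intro w hw; rw [hmemC'] at hw ⊢; rw [hdeg w]; exact hw
      · intro w hw; rw [hmemB'] at hw ⊢; rw [hdeg w]; exact hw
  omega
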